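/- Let S ⊂ ℝ^d be a finite set of centers and let C_j ⊂ ℝ^d be a finite set of points with a designated point a_j, and let Δ_j := (∑_{p∈C_j} ‖p−a_j‖²)/|C_j|. If cost(a_j,S) ≥ 32·Δ_j, then cost(C_j,S) ≥ (1/6)·|C_j|·cost(a_j,S), where cost(C_j,S) := ∑_{p∈C_j} min_{s∈S} ‖p−s‖² and cost(a_j,S) := min_{s∈S} ‖a_j−s‖². -/

import Mathlib

/-!
The squared distance obeys a relaxed triangle inequality, `‖a - s‖² ≤ 2‖a - p‖² + 2‖p - s‖²`,
so every point `p` pays at least `cost(a, S) / 2 - ‖p - a‖²`. Summing over the cluster, the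
subtracted terms total `|C| Δ ≤ |C| cost(a, S) / 32`, which leaves `(1/2 - 1/32) |C| cost(a, S)`.
-/

open Finset

noncomputable section

/-- `ℝ^d` as a Euclidean space. -/
abbrev Pt (d : ℕ) := EuclideanSpace ℝ (Fin d)

/-- `cost(p,S) = min_{s ∈ S} ‖p - s‖²`. -/
noncomputable def pcost {d : ℕ} (p : Pt d) (S : Finset (Pt d)) : ℝ :=
  sInf ((fun s => ‖p - s‖ ^ 2) '' (S : Set (Pt d)))

theorem norm_sub_sq_le_two_mul_add {E : Type*} [SeminormedAddCommGroup E] (a p s : E) :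
    ‖a - s‖ ^ 2 ≤ 2 * (‖a - p‖ ^ 2 + ‖p - s‖ ^ 2) :=
  calc ‖a - s‖ ^ 2 ≤ (‖a - p‖ + ‖p - s‖) ^ 2 := by
        gcongr
        exact norm_sub_le_norm_sub_add_norm_sub a p s
    _ ≤ 2 * (‖a - p‖ ^ 2 + ‖p - s‖ ^ 2) := add_sq_le

section pcost

variable {d : ℕ}

theorem pcost_nonneg (p : Pt d) (S : Finset (Pt d)) : 0 ≤ pcost p S :=
  Real.sInf_nonneg (by rintro _ ⟨s, _, rfl⟩; positivity)

@[simp]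
theorem pcost_empty (p : Pt d) : pcost p ∅ = 0 := by
  simp [pcost]

theorem pcost_le_of_mem {p s : Pt d} {S : Finset (Pt d)} (hs : s ∈ S) :
    pcost p S ≤ ‖p - s‖ ^ 2 :=
  csInf_le ⟨0, by rintro _ ⟨t, _, rfl⟩; positivity⟩ ⟨s, hs, rfl⟩

theorem le_pcost {p : Pt d} {S : Finset (Pt d)} {c : ℝ} (hS : S.Nonempty)
    (h : ∀ s ∈ S, c ≤ ‖p - s‖ ^ 2) : c ≤ pcost p S :=
  le_csInf ((coe_nonempty.mpr hS).image _) (by rintro _ ⟨s, hs, rfl⟩; exact h s hs)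

theorem half_pcost_sub_le_pcost (a p : Pt d) (S : Finset (Pt d)) :
    pcost a S / 2 - ‖p - a‖ ^ 2 ≤ pcost p S := by
  rcases S.eq_empty_or_nonempty with rfl | hS
  · simp
  refine le_pcost hS fun s hs => ?_
  have := (pcost_le_of_mem (p := a) hs).trans (norm_sub_sq_le_two_mul_add a p s)
  rw [norm_sub_rev a p] at this
  linarith

theorem card_mul_half_pcost_sub_le_sum_pcost (a : Pt d) (S C : Finset (Pt d)) :
    C.card * (pcost a S / 2) - ∑ p ∈ C, ‖p - a‖ ^ 2 ≤ ∑ p ∈ C, pcost p S := by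
  rw [← nsmul_eq_mul, ← sum_const, ← sum_sub_distrib]
  exact sum_le_sum fun p _ => half_pcost_sub_le_pcost a p S

end pcost

/-- If the center `aj` of a cluster `Cj` with average cost `Δj` satisfies
`cost(aj,S) ≥ 32·Δj`, then `cost(Cj,S) ≥ (1/6)·|Cj|·cost(aj,S)`. -/
theorem cost_from_center {d : ℕ} (S Cj : Finset (Pt d)) (aj : Pt d)
    (hfar : 32 * ((∑ p ∈ Cj, ‖p - aj‖ ^ 2) / (Cj.card : ℝ)) ≤ pcost aj S) :
    (1 / 6 : ℝ) * (Cj.card : ℝ) * pcost aj S ≤ ∑ p ∈ Cj, pcost p S := by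
  rcases Cj.eq_empty_or_nonempty with rfl | hC
  · simp
  have hcard : (0 : ℝ) < Cj.card := by exact_mod_cast hC.card_pos
  have hspread : ∑ p ∈ Cj, ‖p - aj‖ ^ 2 ≤ Cj.card * pcost aj S / 32 := by
    rw [mul_div_assoc', div_le_iff₀ hcard] at hfar
    linarith
  have := card_mul_half_pcost_sub_le_sum_pcost aj S Cj
  linarith [mul_nonneg hcard.le (pcost_nonneg aj S)]
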